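/- arXiv:1103.2584 — 3 statements merged into one kernel-verified Lean document; each statement's English description precedes it below -/
import Mathlib

section
/- Let p > 1, a > 0, q > 0 satisfy (p−1)a = q−2, let B, K, R, T₀ be positive constants with T₀ ≥ R, and fix δ with 0 < δ < (p−1)/2. Set K₀ = { (1/(2^{q/2} a)) · √(B/(p+1)) · (1 − 2^{−aδ}) }^{−2/(p−1)}. Suppose G : [0,T) → ℝ is twice continuously differentiable and satisfies: G(t) ≥ K t^a for all t with T₀ ≤ t < T; G''(t) ≥ B (t+R)^{−q} |G(t)|^p for all t with 0 ≤ t < T; and G(0) > 0, G'(0) > 0. If K ≥ K₀, then T ≤ 2 T₁, where T₁ = max{ T₀, G(0)/G'(0) }. -/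
/-!
Since `G'' ≥ 0`, `G'` increases and `G` lies above its tangent line at `0`, so `G` has doubled
by the time `M = max T₀ (G 0 / G' 0)`. Multiplying the inequality by `G'` and integrating over
`[0, t]`, with the weight `(τ + R)^(-q)` bounded below by `(2t)^(-q)` (as `R ≤ T₀ ≤ t`), gives
the first-order inequality `G' ≥ κ t^(-q/2) G^((p+1)/2)` for `t ≥ M`, where
`κ = √(B/(p+1)) 2^(-q/2)`. With `s = (p-1)/2` this
reads `(G^(-s))' ≤ -s κ t^(-q/2)`; integrating over `[M, 2M]` gives
`G(M)^(-s) ≥ κ s/β (1 - 2^(-β)) M^(-β)` with `β = q/2 - 1`, which equals `a s` by the critical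
balance. On the other hand `G(M) ≥ K M^a` gives `G(M)^(-s) ≤ K^(-s) M^(-β)`. For `K ≥ K₀` these
are incompatible, because `a δ < a s`.
-/

open Real Set

theorem Convex.monotoneOn_of_hasDerivWithinAt_nonneg' {D : Set ℝ} (hD : Convex ℝ D)
    {f f' : ℝ → ℝ} (hf : ∀ x ∈ D, HasDerivWithinAt f (f' x) D x)
    (hf' : ∀ x ∈ D, 0 ≤ f' x) :
    MonotoneOn f D :=
  monotoneOn_of_hasDerivWithinAt_nonneg hD (fun x hx ↦ (hf x hx).continuousWithinAt)
    (fun x hx ↦ (hf x (interior_subset hx)).mono interior_subset)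
    (fun x hx ↦ hf' x (interior_subset hx))

theorem le_of_hasDerivWithinAt_Icc_nonneg {f f' : ℝ → ℝ} {x y : ℝ} (hxy : x ≤ y)
    (hf : ∀ t ∈ Icc x y, HasDerivWithinAt f (f' t) (Icc x y) t)
    (hf' : ∀ t ∈ Icc x y, 0 ≤ f' t) : f x ≤ f y :=
  (convex_Icc x y).monotoneOn_of_hasDerivWithinAt_nonneg' hf hf'
    (left_mem_Icc.2 hxy) (right_mem_Icc.2 hxy) hxy

theorem add_mul_sub_le_of_monotoneOn_deriv {f f' : ℝ → ℝ} {x y : ℝ} (hxy : x ≤ y)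
    (hf : ∀ t ∈ Icc x y, HasDerivWithinAt f (f' t) (Icc x y) t)
    (hf' : MonotoneOn f' (Icc x y)) : f x + f' x * (y - x) ≤ f y := by
  have key := le_of_hasDerivWithinAt_Icc_nonneg (f := fun t ↦ f t - f' x * t)
    (f' := fun t ↦ f' t - f' x * 1) hxy
    (fun t ht ↦ (hf t ht).sub ((hasDerivWithinAt_id t _).const_mul (f' x)))
    (fun t ht ↦ by simpa using hf' (left_mem_Icc.2 hxy) ht ht.1)
  linarith

theorem mul_rpow_add_one_sub_le_sq_sub_sq {f f' f'' : ℝ → ℝ} {c p x y : ℝ} (hxy : x ≤ y)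
    (hp : p + 1 ≠ 0)
    (hf : ∀ t ∈ Icc x y, HasDerivWithinAt f (f' t) (Icc x y) t)
    (hf' : ∀ t ∈ Icc x y, HasDerivWithinAt f' (f'' t) (Icc x y) t)
    (hpos : ∀ t ∈ Icc x y, 0 < f t) (hf'_nonneg : ∀ t ∈ Icc x y, 0 ≤ f' t)
    (hf'' : ∀ t ∈ Icc x y, c * f t ^ p ≤ f'' t) :
    2 * c / (p + 1) * (f y ^ (p + 1) - f x ^ (p + 1)) ≤ f' y ^ 2 - f' x ^ 2 := by
  have key := le_of_hasDerivWithinAt_Icc_nonneg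
    (f := fun t ↦ f' t ^ 2 - 2 * c / (p + 1) * f t ^ (p + 1))
    (f' := fun t ↦ 2 * f' t * (f'' t - c * f t ^ p)) hxy
    (fun t ht ↦ by
      refine (((hf' t ht).fun_pow 2).sub (((hf t ht).rpow_const (p := p + 1)
        (Or.inl (hpos t ht).ne')).const_mul (2 * c / (p + 1)))).congr_deriv ?_
      rw [add_sub_cancel_right]
      field_simp
      ring)
    (fun t ht ↦ mul_nonneg (mul_nonneg zero_le_two (hf'_nonneg t ht))
      (sub_nonneg.2 (hf'' t ht)))
  linarith

theorem mul_sub_le_rpow_neg_sub_rpow_neg {f f' F F' : ℝ → ℝ} {s x y : ℝ} (hxy : x ≤ y)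
    (hs : 0 ≤ s)
    (hf : ∀ t ∈ Icc x y, HasDerivWithinAt f (f' t) (Icc x y) t)
    (hF : ∀ t ∈ Icc x y, HasDerivWithinAt F (F' t) (Icc x y) t)
    (hpos : ∀ t ∈ Icc x y, 0 < f t)
    (hf' : ∀ t ∈ Icc x y, F' t * f t ^ (1 + s) ≤ f' t) :
    s * (F y - F x) ≤ f x ^ (-s) - f y ^ (-s) := by
  have key := le_of_hasDerivWithinAt_Icc_nonneg
    (f := fun t ↦ -s * F t - f t ^ (-s))
    (f' := fun t ↦ s * (f' t * f t ^ (-s - 1) - F' t)) hxy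
    (fun t ht ↦ by
      refine (((hF t ht).const_mul (-s)).sub
        ((hf t ht).rpow_const (p := -s) (Or.inl (hpos t ht).ne'))).congr_deriv ?_
      ring)
    (fun t ht ↦ by
      have hft := hpos t ht
      have hcancel : f t ^ (1 + s) * f t ^ (-s - 1) = 1 := by
        rw [← rpow_add hft, show 1 + s + (-s - 1) = 0 by ring, rpow_zero]
      refine mul_nonneg hs (sub_nonneg.2 ?_)
      calc F' t = F' t * f t ^ (1 + s) * f t ^ (-s - 1) := by rw [mul_assoc, hcancel, mul_one]
        _ ≤ f' t * f t ^ (-s - 1) := by gcongr; exact hf' t ht)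
  linarith

theorem mul_sub_le_rpow_neg_sub_rpow_neg_of_power_law {f f' : ℝ → ℝ} {κ β s x y : ℝ}
    (hx : 0 < x) (hxy : x ≤ y) (hβ : β ≠ 0) (hs : 0 ≤ s)
    (hf : ∀ t ∈ Icc x y, HasDerivWithinAt f (f' t) (Icc x y) t)
    (hpos : ∀ t ∈ Icc x y, 0 < f t)
    (hf' : ∀ t ∈ Icc x y, κ * t ^ (-(β + 1)) * f t ^ (1 + s) ≤ f' t) :
    s * κ / β * (x ^ (-β) - y ^ (-β)) ≤ f x ^ (-s) - f y ^ (-s) := by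
  have hF : ∀ t ∈ Icc x y,
      HasDerivWithinAt (fun t ↦ -(κ / β) * t ^ (-β)) (κ * t ^ (-(β + 1))) (Icc x y) t :=
    fun t ht ↦ (((hasDerivAt_rpow_const (Or.inl (hx.trans_le ht.1).ne')).const_mul
      (-(κ / β))).hasDerivWithinAt).congr_deriv
        (by rw [show -β - 1 = -(β + 1) by ring]; field_simp)
  calc s * κ / β * (x ^ (-β) - y ^ (-β))
      = s * (-(κ / β) * y ^ (-β) - -(κ / β) * x ^ (-β)) := by ring
    _ ≤ f x ^ (-s) - f y ^ (-s) := mul_sub_le_rpow_neg_sub_rpow_neg hxy hs hf hF hpos hf'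

theorem rpow_div_two_sq {x : ℝ} (hx : 0 ≤ x) (r : ℝ) : (x ^ (r / 2)) ^ 2 = x ^ r := by
  rw [← rpow_mul_natCast hx]; norm_num

namespace ODI

variable {p q B R T : ℝ} {G G' G'' : ℝ → ℝ}

theorem monotoneOn_deriv (hB : 0 ≤ B) (hR : 0 ≤ R)
    (hG'' : ∀ t ∈ Ico (0 : ℝ) T, HasDerivWithinAt G' (G'' t) (Ico 0 T) t)
    (hODI : ∀ t, 0 ≤ t → t < T → B * (t + R) ^ (-q) * |G t| ^ p ≤ G'' t) :
    MonotoneOn G' (Ico 0 T) :=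
  (convex_Ico 0 T).monotoneOn_of_hasDerivWithinAt_nonneg' hG'' fun t ht ↦
    (mul_nonneg (mul_nonneg hB (rpow_nonneg (by linarith [ht.1]) _))
      (rpow_nonneg (abs_nonneg _) _)).trans (hODI t ht.1 ht.2)

theorem add_deriv_mul_le (hB : 0 ≤ B) (hR : 0 ≤ R)
    (hG' : ∀ t ∈ Ico (0 : ℝ) T, HasDerivWithinAt G (G' t) (Ico 0 T) t)
    (hG'' : ∀ t ∈ Ico (0 : ℝ) T, HasDerivWithinAt G' (G'' t) (Ico 0 T) t)
    (hODI : ∀ t, 0 ≤ t → t < T → B * (t + R) ^ (-q) * |G t| ^ p ≤ G'' t)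
    {t : ℝ} (ht : t ∈ Ico 0 T) : G 0 + G' 0 * t ≤ G t := by
  have hsub : Icc 0 t ⊆ Ico 0 T := Icc_subset_Ico_right ht.2
  simpa using add_mul_sub_le_of_monotoneOn_deriv ht.1 (fun τ hτ ↦ (hG' τ (hsub hτ)).mono hsub)
    ((monotoneOn_deriv hB hR hG'' hODI).mono hsub)

theorem pos_and_deriv_pos (hB : 0 ≤ B) (hR : 0 ≤ R)
    (hG' : ∀ t ∈ Ico (0 : ℝ) T, HasDerivWithinAt G (G' t) (Ico 0 T) t)
    (hG'' : ∀ t ∈ Ico (0 : ℝ) T, HasDerivWithinAt G' (G'' t) (Ico 0 T) t)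
    (hODI : ∀ t, 0 ≤ t → t < T → B * (t + R) ^ (-q) * |G t| ^ p ≤ G'' t)
    (hG0 : 0 < G 0) (hG'0 : 0 < G' 0) {t : ℝ} (ht : t ∈ Ico 0 T) : 0 < G t ∧ 0 < G' t :=
  ⟨by nlinarith [add_deriv_mul_le hB hR hG' hG'' hODI ht, ht.1],
    hG'0.trans_le <| monotoneOn_deriv hB hR hG'' hODI ⟨le_rfl, ht.1.trans_lt ht.2⟩ ht ht.1⟩

theorem energy_ineq {t : ℝ} (hp : p + 1 ≠ 0) (hq : 0 ≤ q)
    (hB : 0 ≤ B) (hR : 0 < R)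
    (hG' : ∀ t ∈ Ico (0 : ℝ) T, HasDerivWithinAt G (G' t) (Ico 0 T) t)
    (hG'' : ∀ t ∈ Ico (0 : ℝ) T, HasDerivWithinAt G' (G'' t) (Ico 0 T) t)
    (hODI : ∀ t, 0 ≤ t → t < T → B * (t + R) ^ (-q) * |G t| ^ p ≤ G'' t)
    (hG0 : 0 < G 0) (hG'0 : 0 < G' 0) (hRt : R ≤ t) (htT : t < T) :
    2 * (B * (2 * t) ^ (-q)) / (p + 1) * (G t ^ (p + 1) - G 0 ^ (p + 1)) ≤ G' t ^ 2 := by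
  have hsub : Icc 0 t ⊆ Ico 0 T := Icc_subset_Ico_right htT
  have hpos := fun τ (hτ : τ ∈ Icc 0 t) ↦
    pos_and_deriv_pos hB hR.le hG' hG'' hODI hG0 hG'0 (hsub hτ)
  have hODI' : ∀ τ ∈ Icc 0 t, B * (2 * t) ^ (-q) * G τ ^ p ≤ G'' τ := fun τ hτ ↦ by
    have hweight : (2 * t) ^ (-q) ≤ (τ + R) ^ (-q) :=
      rpow_le_rpow_of_nonpos (by linarith [hτ.1]) (by linarith [hτ.2]) (neg_nonpos.2 hq)
    calc B * (2 * t) ^ (-q) * G τ ^ p ≤ B * (τ + R) ^ (-q) * |G τ| ^ p := by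
          rw [abs_of_pos (hpos τ hτ).1]
          exact mul_le_mul_of_nonneg_right (mul_le_mul_of_nonneg_left hweight hB)
            (rpow_nonneg (hpos τ hτ).1.le _)
      _ ≤ G'' τ := hODI τ hτ.1 (hsub hτ).2
  have := mul_rpow_add_one_sub_le_sq_sub_sq (hR.le.trans hRt) hp
    (fun τ hτ ↦ (hG' τ (hsub hτ)).mono hsub) (fun τ hτ ↦ (hG'' τ (hsub hτ)).mono hsub)
    (fun τ hτ ↦ (hpos τ hτ).1) (fun τ hτ ↦ (hpos τ hτ).2.le) hODI'
  nlinarith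

theorem first_order_ineq {t : ℝ} (hp : 0 ≤ p) (hq : 0 ≤ q)
    (hB : 0 ≤ B) (hR : 0 < R)
    (hG' : ∀ t ∈ Ico (0 : ℝ) T, HasDerivWithinAt G (G' t) (Ico 0 T) t)
    (hG'' : ∀ t ∈ Ico (0 : ℝ) T, HasDerivWithinAt G' (G'' t) (Ico 0 T) t)
    (hODI : ∀ t, 0 ≤ t → t < T → B * (t + R) ^ (-q) * |G t| ^ p ≤ G'' t)
    (hG0 : 0 < G 0) (hG'0 : 0 < G' 0) (hRt : R ≤ t) (hGt : G 0 / G' 0 ≤ t) (htT : t < T) :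
    √(B / (p + 1)) * 2 ^ (-(q / 2)) * t ^ (-(q / 2)) * G t ^ ((p + 1) / 2) ≤ G' t := by
  have ht : t ∈ Ico 0 T := ⟨hR.le.trans hRt, htT⟩
  obtain ⟨hGpos, hG'pos⟩ := pos_and_deriv_pos hB hR.le hG' hG'' hODI hG0 hG'0 ht
  have hdouble : 2 * G 0 ≤ G t := by
    have := add_deriv_mul_le hB hR.le hG' hG'' hODI ht
    rw [div_le_iff₀ hG'0] at hGt
    linarith
  have hhalf : G 0 ^ (p + 1) * 2 ≤ G t ^ (p + 1) := calc
    G 0 ^ (p + 1) * 2 ≤ G 0 ^ (p + 1) * 2 ^ (p + 1) := by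
      gcongr
      exact self_le_rpow_of_one_le one_le_two (by linarith)
    _ = (2 * G 0) ^ (p + 1) := by rw [mul_rpow zero_le_two hG0.le, mul_comm]
    _ ≤ G t ^ (p + 1) := by gcongr
  have henergy := energy_ineq (by linarith) hq hB hR hG' hG'' hODI hG0 hG'0 hRt htT
  refine le_of_sq_le_sq ?_ hG'pos.le
  rw [mul_pow, mul_pow, mul_pow, sq_sqrt (by positivity), ← neg_div, rpow_div_two_sq zero_le_two,
    rpow_div_two_sq ht.1, rpow_div_two_sq hGpos.le, mul_assoc _ (2 ^ (-q)),
    ← mul_rpow zero_le_two ht.1]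
  have hc : 0 ≤ B / (p + 1) * (2 * t) ^ (-q) :=
    mul_nonneg (div_nonneg hB (by linarith)) (rpow_nonneg (by linarith [ht.1]) _)
  calc B / (p + 1) * (2 * t) ^ (-q) * G t ^ (p + 1)
      ≤ B / (p + 1) * (2 * t) ^ (-q) * (2 * (G t ^ (p + 1) - G 0 ^ (p + 1))) :=
        mul_le_mul_of_nonneg_left (by linarith) hc
    _ = 2 * (B * (2 * t) ^ (-q)) / (p + 1) * (G t ^ (p + 1) - G 0 ^ (p + 1)) := by ring
    _ ≤ G' t ^ 2 := henergy

theorem rpow_neg_ge {M : ℝ} (hp : 1 < p) (hq : 2 < q) (hB : 0 ≤ B) (hR : 0 < R)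
    (hG' : ∀ t ∈ Ico (0 : ℝ) T, HasDerivWithinAt G (G' t) (Ico 0 T) t)
    (hG'' : ∀ t ∈ Ico (0 : ℝ) T, HasDerivWithinAt G' (G'' t) (Ico 0 T) t)
    (hODI : ∀ t, 0 ≤ t → t < T → B * (t + R) ^ (-q) * |G t| ^ p ≤ G'' t)
    (hG0 : 0 < G 0) (hG'0 : 0 < G' 0) (hRM : R ≤ M) (hGM : G 0 / G' 0 ≤ M) (hMT : 2 * M < T) :
    √(B / (p + 1)) * 2 ^ (-(q / 2)) * ((p - 1) / (q - 2)) * (1 - 2 ^ (-(q / 2 - 1))) *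
      M ^ (-(q / 2 - 1)) ≤ G M ^ (-((p - 1) / 2)) := by
  have hM : 0 < M := hR.trans_le hRM
  have hsub : Icc M (2 * M) ⊆ Ico 0 T := fun t ht ↦ ⟨hM.le.trans ht.1, ht.2.trans_lt hMT⟩
  have hpos : ∀ t ∈ Icc M (2 * M), 0 < G t := fun t ht ↦
    (pos_and_deriv_pos hB hR.le hG' hG'' hODI hG0 hG'0 (hsub ht)).1
  have hfirst : ∀ t ∈ Icc M (2 * M), √(B / (p + 1)) * 2 ^ (-(q / 2)) *
      t ^ (-(q / 2 - 1 + 1)) * G t ^ (1 + (p - 1) / 2) ≤ G' t := fun t ht ↦ by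
    rw [sub_add_cancel, show 1 + (p - 1) / 2 = (p + 1) / 2 by ring]
    exact first_order_ineq (by linarith) (by linarith) hB hR hG' hG'' hODI hG0 hG'0
      (hRM.trans ht.1) (hGM.trans ht.1) (hsub ht).2
  calc _ = (p - 1) / 2 * (√(B / (p + 1)) * 2 ^ (-(q / 2))) / (q / 2 - 1) *
        (M ^ (-(q / 2 - 1)) - (2 * M) ^ (-(q / 2 - 1))) := by
        rw [mul_rpow zero_le_two hM.le]
        field_simp
    _ ≤ G M ^ (-((p - 1) / 2)) - G (2 * M) ^ (-((p - 1) / 2)) :=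
        mul_sub_le_rpow_neg_sub_rpow_neg_of_power_law hM (by linarith) (by linarith)
          (by linarith) (fun t ht ↦ (hG' t (hsub ht)).mono hsub) hpos hfirst
    _ ≤ G M ^ (-((p - 1) / 2)) :=
        sub_le_self _ (rpow_nonneg (hpos _ ⟨by linarith, le_rfl⟩).le _)

end ODI

theorem ODI_blowup_critical_balance_general
    (p a q B K R T₀ δ T : ℝ)
    (G G' G'' : ℝ → ℝ)
    (hp : 1 < p) (ha : 0 < a)
    (hbal : (p - 1) * a = q - 2)
    (hB : 0 < B) (hK : 0 < K) (hR : 0 < R) (hRT₀ : R ≤ T₀)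
    (hδ : 0 < δ) (hδ' : δ < (p - 1) / 2)
    (hG' : ∀ t ∈ Set.Ico (0 : ℝ) T, HasDerivWithinAt G (G' t) (Set.Ico 0 T) t)
    (hG'' : ∀ t ∈ Set.Ico (0 : ℝ) T, HasDerivWithinAt G' (G'' t) (Set.Ico 0 T) t)
    (hlow : ∀ t, T₀ ≤ t → t < T → K * t ^ a ≤ G t)
    (hODI : ∀ t, 0 ≤ t → t < T → B * (t + R) ^ (-q) * |G t| ^ p ≤ G'' t)
    (hG0 : 0 < G 0) (hG'0 : 0 < G' 0)
    (hK₀ : (1 / ((2 : ℝ) ^ (q / 2) * a) * Real.sqrt (B / (p + 1)) *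
        (1 - (2 : ℝ) ^ (-(a * δ)))) ^ (-(2 / (p - 1))) ≤ K) :
    T ≤ 2 * max T₀ (G 0 / G' 0) := by
  by_contra! hT
  set M := max T₀ (G 0 / G' 0)
  set s := (p - 1) / 2
  set κ := √(B / (p + 1)) * 2 ^ (-(q / 2)) * ((p - 1) / (q - 2))
  have hs : 0 < s := div_pos (by linarith) two_pos
  have hβ : q / 2 - 1 = a * s := by simp only [s]; linarith
  have hκ : 0 < κ := mul_pos (mul_pos (sqrt_pos.2 (div_pos hB (by linarith))) (by positivity))
    (div_pos (by linarith) (by nlinarith))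
  have hM : 0 < M := (div_pos hG0 hG'0).trans_le (le_max_right _ _)
  have hrate : κ * (1 - 2 ^ (-(q / 2 - 1))) * M ^ (-(q / 2 - 1)) ≤ G M ^ (-s) :=
    ODI.rpow_neg_ge hp (by nlinarith) hB.le hR hG' hG'' hODI hG0 hG'0
    (hRT₀.trans (le_max_left _ _)) (le_max_right _ _) hT
  have hGM : G M ^ (-s) ≤ K ^ (-s) * M ^ (-(q / 2 - 1)) := calc
    G M ^ (-s) ≤ (K * M ^ a) ^ (-s) :=
      rpow_le_rpow_of_nonpos (by positivity) (hlow M (le_max_left _ _) (by linarith)) (by linarith)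
    _ = K ^ (-s) * M ^ (-(q / 2 - 1)) := by
      rw [mul_rpow hK.le (by positivity), ← rpow_mul hM.le, hβ, mul_neg]
  have hKs : K ^ (-s) ≤ κ * (1 - 2 ^ (-(a * δ))) := by
    have hX : 0 < κ * (1 - 2 ^ (-(a * δ))) :=
      mul_pos hκ (sub_pos.2 (rpow_lt_one_of_one_lt_of_neg one_lt_two (by nlinarith)))
    rw [← rpow_inv_le_iff_of_neg hX hK (by linarith), ← neg_inv, inv_div]
    convert hK₀ using 2
    simp only [κ, rpow_neg zero_le_two, ← hbal]
    field_simp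
    exact mul_div_cancel_left₀ _ (by linarith)
  have h2 : (2 : ℝ) ^ (-(q / 2 - 1)) < 2 ^ (-(a * δ)) :=
    rpow_lt_rpow_of_exponent_lt one_lt_two (by nlinarith)
  have hscale : 0 < κ * M ^ (-(q / 2 - 1)) := by positivity
  nlinarith [mul_le_mul_of_nonneg_right hKs (rpow_nonneg hM.le (-(q / 2 - 1)))]

/-- **Blow-up for an ordinary differential inequality with the critical balance
`(p-1)a = q-2`** (Lemma 2.1).
If `G` is `C²` on `[0,T)`, satisfies `G(t) ≥ K t^a` for `T₀ ≤ t < T`,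
`G''(t) ≥ B (t+R)^{-q} |G(t)|^p` for `0 ≤ t < T`, `G(0) > 0`, `G'(0) > 0`,
and `K ≥ K₀`, then `T ≤ 2 max{T₀, G(0)/G'(0)}`. -/
theorem ODI_blowup_critical_balance
    (p a q B K R T₀ δ T : ℝ)
    (G G' G'' : ℝ → ℝ)
    (hp : 1 < p) (ha : 0 < a) (hq : 0 < q)
    (hbal : (p - 1) * a = q - 2)
    (hB : 0 < B) (hK : 0 < K) (hR : 0 < R) (hT₀ : 0 < T₀) (hRT₀ : R ≤ T₀)
    (hδ : 0 < δ) (hδ' : δ < (p - 1) / 2)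
    (hG' : ∀ t ∈ Set.Ico (0 : ℝ) T, HasDerivWithinAt G (G' t) (Set.Ico 0 T) t)
    (hG'' : ∀ t ∈ Set.Ico (0 : ℝ) T, HasDerivWithinAt G' (G'' t) (Set.Ico 0 T) t)
    (hGcont : ContinuousOn G'' (Set.Ico 0 T))
    (hlow : ∀ t, T₀ ≤ t → t < T → K * t ^ a ≤ G t)
    (hODI : ∀ t, 0 ≤ t → t < T → B * (t + R) ^ (-q) * |G t| ^ p ≤ G'' t)
    (hG0 : 0 < G 0) (hG'0 : 0 < G' 0)
    (hK₀ : (1 / ((2 : ℝ) ^ (q / 2) * a) * Real.sqrt (B / (p + 1)) *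
        (1 - (2 : ℝ) ^ (-(a * δ)))) ^ (-(2 / (p - 1))) ≤ K) :
    T ≤ 2 * max T₀ (G 0 / G' 0) :=
  ODI_blowup_critical_balance_general p a q B K R T₀ δ T G G' G'' hp ha hbal hB hK hR hRT₀ hδ hδ'
    hG' hG'' hlow hODI hG0 hG'0 hK₀
end

section
/- Let p > 1 and let B, R, q be positive constants. Suppose G : [0,T) → ℝ is twice continuously differentiable and satisfies G''(t) ≥ B (t+R)^{−q} |G(t)|^p for all 0 ≤ t < T, together with G(0) > 0 and G'(0) > 0. Then for every t with G(0)/G'(0) ≤ t < T one has G'(t) > √(B/(p+1)) · G(t)^{(p+1)/2} / (t+R)^{q/2}. (In particular G'(t) ≥ G'(0) > 0 and G(t) ≥ G'(0) t + G(0) > 0 for all 0 ≤ t < T.) -/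
/-!
Since `G'' ≥ 0`, `G'` increases and `G` lies above its tangent line at `0`, so `G > 0`, and for
`t ≥ G(0)/G'(0)` even `G(t) ≥ 2 G(0)`. Fixing such a `t` and freezing the weight at its smallest
value `C = B (t+R)^{-q}` on `[0,t]`, we get `G'' ≥ C G^p` there, so the energy
`G'² - 2C/(p+1) · G^{p+1}` is nondecreasing on `[0,t]`. Comparing its values at `0` and `t`,
and using `G(0)^{p+1} ≤ G(t)^{p+1}/2`, gives `G'(t)² > C/(p+1) · G(t)^{p+1}`.
-/

open Set Real

theorem monotoneOn_of_forall_hasDerivWithinAt_nonneg {D : Set ℝ} (hD : Convex ℝ D)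
    {f f' : ℝ → ℝ} (hf : ∀ x ∈ D, HasDerivWithinAt f (f' x) D x)
    (hf'₀ : ∀ x ∈ D, 0 ≤ f' x) : MonotoneOn f D :=
  monotoneOn_of_hasDerivWithinAt_nonneg hD (fun x hx ↦ (hf x hx).continuousWithinAt)
    (fun x hx ↦ (hf x (interior_subset hx)).mono interior_subset)
    fun x hx ↦ hf'₀ x (interior_subset hx)

theorem add_deriv_mul_sub_le_of_second_deriv_nonneg {D : Set ℝ} {f f' f'' : ℝ → ℝ}
    (hD : Convex ℝ D)
    (hf : ∀ x ∈ D, HasDerivWithinAt f (f' x) D x)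
    (hf' : ∀ x ∈ D, HasDerivWithinAt f' (f'' x) D x) (hf'' : ∀ x ∈ D, 0 ≤ f'' x)
    {a t : ℝ} (ha : a ∈ D) (ht : t ∈ D) (hat : a ≤ t) :
    f a + f' a * (t - a) ≤ f t := by
  have hsub : Icc a t ⊆ D := hD.ordConnected.out ha ht
  have hf'_mono := monotoneOn_of_forall_hasDerivWithinAt_nonneg hD hf' hf''
  have hg : MonotoneOn (fun x ↦ f x - f' a * x) (Icc a t) := by
    refine monotoneOn_of_forall_hasDerivWithinAt_nonneg (convex_Icc a t)
      (f' := fun x ↦ f' x - f' a) (fun x hx ↦ ?_) fun x hx ↦ ?_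
    · exact (((hf x (hsub hx)).mono hsub).sub
        ((hasDerivWithinAt_id x _).const_mul (f' a))).congr_deriv (by rw [mul_one])
    · exact sub_nonneg.2 (hf'_mono ha (hsub hx) hx.1)
  have := hg (left_mem_Icc.2 hat) (right_mem_Icc.2 hat) hat
  dsimp only at this
  linarith

theorem monotoneOn_energy_of_le_second_deriv {D : Set ℝ} (hD : Convex ℝ D) {G G' G'' : ℝ → ℝ}
    {p C : ℝ} (hp : 0 ≤ p)
    (hG : ∀ x ∈ D, HasDerivWithinAt G (G' x) D x)
    (hG' : ∀ x ∈ D, HasDerivWithinAt G' (G'' x) D x)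
    (hG'_nonneg : ∀ x ∈ D, 0 ≤ G' x) (hG'' : ∀ x ∈ D, C * G x ^ p ≤ G'' x) :
    MonotoneOn (fun x ↦ G' x ^ 2 - 2 * C / (p + 1) * G x ^ (p + 1)) D := by
  refine monotoneOn_of_forall_hasDerivWithinAt_nonneg hD
    (f' := fun x ↦ 2 * G' x * (G'' x - C * G x ^ p)) (fun x hx ↦ ?_) fun x hx ↦ ?_
  · have hpow := (hG x hx).rpow_const (p := p + 1) (Or.inr (by linarith))
    refine (((hG' x hx).pow 2).sub (hpow.const_mul (2 * C / (p + 1)))).congr_deriv ?_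
    rw [add_sub_cancel_right]
    field_simp
    ring
  · exact mul_nonneg (mul_nonneg zero_le_two (hG'_nonneg x hx)) (sub_nonneg.2 (hG'' x hx))

theorem two_mul_rpow_le_rpow {a b r : ℝ} (ha : 0 ≤ a) (hab : 2 * a ≤ b) (hr : 1 ≤ r) :
    2 * a ^ r ≤ b ^ r :=
  calc 2 * a ^ r ≤ 2 ^ r * a ^ r := by
        gcongr
        simpa using rpow_le_rpow_of_exponent_le one_le_two hr
    _ = (2 * a) ^ r := (mul_rpow zero_le_two ha).symm
    _ ≤ b ^ r := by gcongr

theorem lt_sq_of_energy_le {A p x₀ x y₀ y : ℝ} (hA : 0 ≤ A) (hp : 0 ≤ p) (hx₀ : 0 ≤ x₀)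
    (hx : 2 * x₀ ≤ x) (hy₀ : 0 < y₀)
    (h : y₀ ^ 2 - 2 * A / (p + 1) * x₀ ^ (p + 1) ≤ y ^ 2 - 2 * A / (p + 1) * x ^ (p + 1)) :
    A / (p + 1) * x ^ (p + 1) < y ^ 2 := by
  have hhalf := mul_le_mul_of_nonneg_left (two_mul_rpow_le_rpow hx₀ hx (by linarith : 1 ≤ p + 1))
    (div_nonneg hA (by linarith) : 0 ≤ A / (p + 1))
  rw [mul_div_assoc] at h
  linarith [pow_pos hy₀ 2]

theorem sq_sqrt_mul_rpow_div_rpow {A x y : ℝ} (r s : ℝ) (hA : 0 ≤ A) (hx : 0 ≤ x) (hy : 0 ≤ y) :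
    (√A * x ^ (r / 2) / y ^ (s / 2)) ^ 2 = A * x ^ r / y ^ s := by
  have half_sq : ∀ {z : ℝ} (u : ℝ), 0 ≤ z → (z ^ (u / 2)) ^ 2 = z ^ u := fun u hz ↦ by
    rw [← rpow_natCast, ← rpow_mul hz]
    norm_num
  rw [div_pow, mul_pow, sq_sqrt hA, half_sq r hx, half_sq s hy]

theorem ODI_first_stage_general
    (p B R q T : ℝ)
    (G G' G'' : ℝ → ℝ)
    (hp : 1 < p) (hB : 0 < B) (hR : 0 < R) (hq : 0 < q)
    (hG' : ∀ t ∈ Set.Ico (0 : ℝ) T, HasDerivWithinAt G (G' t) (Set.Ico 0 T) t)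
    (hG'' : ∀ t ∈ Set.Ico (0 : ℝ) T, HasDerivWithinAt G' (G'' t) (Set.Ico 0 T) t)
    (hODI : ∀ t, 0 ≤ t → t < T → B * (t + R) ^ (-q) * |G t| ^ p ≤ G'' t)
    (hG0 : 0 < G 0) (hG'0 : 0 < G' 0) :
    (∀ t, 0 ≤ t → t < T → G' 0 ≤ G' t ∧ G' 0 * t + G 0 ≤ G t) ∧
      (∀ t, G 0 / G' 0 ≤ t → t < T →
        Real.sqrt (B / (p + 1)) * G t ^ ((p + 1) / 2) / (t + R) ^ (q / 2) < G' t) := by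
  have hG''_nonneg : ∀ t ∈ Ico 0 T, 0 ≤ G'' t := fun t ht ↦ by
    have : 0 < t + R := by linarith [ht.1]
    exact (by positivity : 0 ≤ B * (t + R) ^ (-q) * |G t| ^ p).trans (hODI t ht.1 ht.2)
  have hG'_ge : ∀ t ∈ Ico 0 T, G' 0 ≤ G' t := fun t ht ↦
    monotoneOn_of_forall_hasDerivWithinAt_nonneg (convex_Ico 0 T) hG'' hG''_nonneg
      (left_mem_Ico.2 (ht.1.trans_lt ht.2)) ht ht.1
  have htangent : ∀ t ∈ Ico 0 T, G 0 + G' 0 * t ≤ G t := fun t ht ↦ by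
    simpa using add_deriv_mul_sub_le_of_second_deriv_nonneg (convex_Ico 0 T) hG' hG''
      hG''_nonneg (left_mem_Ico.2 (ht.1.trans_lt ht.2)) ht ht.1
  refine ⟨fun t h0 hT ↦ ⟨hG'_ge t ⟨h0, hT⟩, by linarith [htangent t ⟨h0, hT⟩]⟩, fun t ht hT ↦ ?_⟩
  have ht0 : 0 ≤ t := (div_pos hG0 hG'0).le.trans ht
  have htR : 0 < t + R := by linarith
  have hsub : Icc 0 t ⊆ Ico 0 T := Icc_subset_Ico_right hT
  have hGt : 2 * G 0 ≤ G t := by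
    linarith [htangent t ⟨ht0, hT⟩, (div_le_iff₀' hG'0).1 ht]
  have hODI_t : ∀ s ∈ Icc 0 t, B * (t + R) ^ (-q) * G s ^ p ≤ G'' s := fun s hs ↦ by
    have hGs : 0 < G s := by nlinarith [htangent s (hsub hs), hs.1]
    have hw : (t + R) ^ (-q) ≤ (s + R) ^ (-q) :=
      rpow_le_rpow_of_nonpos (by linarith [hs.1]) (by linarith [hs.2]) (by linarith)
    rw [← abs_of_pos hGs]
    exact (by gcongr : _ ≤ B * (s + R) ^ (-q) * |G s| ^ p).trans (hODI s hs.1 (hsub hs).2)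
  have henergy := monotoneOn_energy_of_le_second_deriv (convex_Icc 0 t) (by linarith)
    (fun s hs ↦ (hG' s (hsub hs)).mono hsub) (fun s hs ↦ (hG'' s (hsub hs)).mono hsub)
    (fun s hs ↦ hG'0.le.trans (hG'_ge s (hsub hs))) hODI_t
    (left_mem_Icc.2 ht0) (right_mem_Icc.2 ht0) ht0
  refine lt_of_pow_lt_pow_left₀ 2 (hG'0.le.trans (hG'_ge t ⟨ht0, hT⟩)) ?_
  rw [sq_sqrt_mul_rpow_div_rpow (p + 1) q (by positivity) (by linarith) htR.le]
  calc B / (p + 1) * G t ^ (p + 1) / (t + R) ^ q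
      = B * (t + R) ^ (-q) / (p + 1) * G t ^ (p + 1) := by rw [rpow_neg htR.le]; ring
    _ < G' t ^ 2 := lt_sq_of_energy_le (by positivity) (by linarith) hG0.le hGt hG'0 henergy

/-- First-stage differential inequality in the proof of the ODI blow-up lemma:
if `G` is `C²` on `[0,T)` with `G''(t) ≥ B (t+R)^{-q} |G(t)|^p`, `G(0) > 0` and
`G'(0) > 0`, then `G'(t) ≥ G'(0)` and `G(t) ≥ G'(0) t + G(0)` on `[0,T)`, and
`G'(t) > √(B/(p+1)) · G(t)^{(p+1)/2} / (t+R)^{q/2}` for `G(0)/G'(0) ≤ t < T`. -/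
theorem ODI_first_stage
    (p B R q T : ℝ)
    (G G' G'' : ℝ → ℝ)
    (hp : 1 < p) (hB : 0 < B) (hR : 0 < R) (hq : 0 < q)
    (hG' : ∀ t ∈ Set.Ico (0 : ℝ) T, HasDerivWithinAt G (G' t) (Set.Ico 0 T) t)
    (hG'' : ∀ t ∈ Set.Ico (0 : ℝ) T, HasDerivWithinAt G' (G'' t) (Set.Ico 0 T) t)
    (hGcont : ContinuousOn G'' (Set.Ico 0 T))
    (hODI : ∀ t, 0 ≤ t → t < T → B * (t + R) ^ (-q) * |G t| ^ p ≤ G'' t)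
    (hG0 : 0 < G 0) (hG'0 : 0 < G' 0) :
    (∀ t, 0 ≤ t → t < T → G' 0 ≤ G' t ∧ G' 0 * t + G 0 ≤ G t) ∧
      (∀ t, G 0 / G' 0 ≤ t → t < T →
        Real.sqrt (B / (p + 1)) * G t ^ ((p + 1) / 2) / (t + R) ^ (q / 2) < G' t) :=
  ODI_first_stage_general p B R q T G G' G'' hp hB hR hq hG' hG'' hODI hG0 hG'0
end

section
/- Let n ≥ 4, p = p₀(n) = (n+1+√(n²+10n−7))/(2(n−1)), and let R, C, ε > 0. Suppose F ∈ C²([0,T)) with F'' ≥ 0 satisfies both: (frame) F''(t) ≥ C ∫₀^{t−R} ρ^{(n−1)(1−p/2)} (t−ρ+R)^{−(n−1)p/2} ( ∫₀^{(t−ρ−R)/2} F''(s) ds )^p dρ for R ≤ t < T; and (first step) F''(t) ≥ C ε^p (t+R)^{(n−1)(1−p/2)} for 0 ≤ t < T. Set C₁ = C^{p+1} ε^{p²} / ( 2^{n−2} · 3^{(n−1)p/2} · ( n − (n−1)p/2 )^p ). Then for all t with a₁R = 2R ≤ t < T one has F''(t) ≥ C₁ (t − 2R)^{(n−1)(1−p/2)}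 · log( t / (2R) ). -/
/-- The constant `C₁ = C^{p+1} ε^{p²} / (2^{n-2}·3^{(n-1)p/2}·(n-(n-1)p/2)^p)`. -/
noncomputable def Cone (n : ℕ) (p C ε : ℝ) : ℝ :=
  C ^ (p + 1) * ε ^ (p ^ 2) /
    ((2 : ℝ) ^ ((n : ℝ) - 2) * (3 : ℝ) ^ (((n : ℝ) - 1) * p / 2) *
      ((n : ℝ) - ((n : ℝ) - 1) * p / 2) ^ p)

/-!
The first-step bound gives `∫₀^σ F'' ≥ C ε^p σ^(m+1)/(m+1)` with `m = (n-1)(1-p/2)`. In the frame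
inequality keep only `ρ ∈ [(t-2R)/2, t-2R]`: there `ρ^m ≥ ((t-2R)/2)^m` and
`t-ρ+R ≤ 3(t-ρ-R)`, so with `q = (n-1)p/2` the integrand is at least a constant times
`(t-ρ-R)^((m+1)p-q)`. The defining equation of `p₀(n)` is exactly `(m+1)p = q-1`, so this power
is `(t-ρ-R)⁻¹`, whose integral over that range is `log (t/(2R))`.
-/

open Real Set intervalIntegral

section CriticalExponent

variable {n p : ℝ}

lemma critical_exponent_quadratic (hn : 1 < n)
    (hp : p = (n + 1 + √(n ^ 2 + 10 * n - 7)) / (2 * (n - 1))) :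
    (n - 1) * p ^ 2 = (n + 1) * p + 2 := by
  have hs : √(n ^ 2 + 10 * n - 7) ^ 2 = n ^ 2 + 10 * n - 7 := Real.sq_sqrt (by nlinarith)
  have hn1 : n - 1 ≠ 0 := by linarith
  have hp' : 2 * (n - 1) * p = n + 1 + √(n ^ 2 + 10 * n - 7) := by
    rw [hp]; field_simp
  apply mul_left_cancel₀ hn1
  linear_combination (1 / 4 : ℝ) * ((2 * (n - 1) * p + (n + 1 + √(n ^ 2 + 10 * n - 7)) -
    2 * (n + 1)) * hp' + hs)

lemma critical_exponent_pos (hn : 1 < n)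
    (hp : p = (n + 1 + √(n ^ 2 + 10 * n - 7)) / (2 * (n - 1))) : 0 < p := by
  rw [hp]; have := sqrt_nonneg (n ^ 2 + 10 * n - 7); apply div_pos <;> linarith

lemma critical_exponent_le_two (hn : 4 ≤ n)
    (hp : p = (n + 1 + √(n ^ 2 + 10 * n - 7)) / (2 * (n - 1))) : p ≤ 2 := by
  have hquad := critical_exponent_quadratic (by linarith) hp
  have hp0 := critical_exponent_pos (by linarith) hp
  by_contra! h
  nlinarith [mul_pos (sub_pos.2 h) (by nlinarith : 0 < (n - 1) * p + n - 3)]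

end CriticalExponent

lemma div_mul_rpow_le_integral {f : ℝ → ℝ} {K m σ : ℝ} (hm : -1 < m) (hσ : 0 ≤ σ)
    (hf : IntervalIntegrable f MeasureTheory.volume 0 σ) (hle : ∀ s ∈ Icc 0 σ, K * s ^ m ≤ f s) :
    K / (m + 1) * σ ^ (m + 1) ≤ ∫ s in 0..σ, f s :=
  calc K / (m + 1) * σ ^ (m + 1) = ∫ s in 0..σ, K * s ^ m := by
        rw [intervalIntegral.integral_const_mul, integral_rpow (Or.inl hm),
          zero_rpow (by linarith)]
        ring
    _ ≤ ∫ s in 0..σ, f s := integral_mono_on hσ ((intervalIntegrable_rpow' hm).const_mul K) hf hle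

lemma integral_inv_sub_left {a b c : ℝ} (ha : a < c) (hb : b < c) :
    ∫ x in a..b, (c - x)⁻¹ = log ((c - a) / (c - b)) := by
  rw [integral_comp_sub_left (fun x : ℝ => x⁻¹) c,
    integral_inv (notMem_uIcc_of_lt (by linarith) (by linarith))]

/-- The integrand of the frame inequality, with `m = (n-1)(1-p/2)` and `q = (n-1)p/2`. -/
noncomputable def frameIntegrand (m q p R t : ℝ) (f : ℝ → ℝ) (ρ : ℝ) : ℝ :=
  ρ ^ m * (t - ρ + R) ^ (-q) * (∫ s in 0..(t - ρ - R) / 2, f s) ^ p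

section FrameIntegrand

variable {m q p R t : ℝ} {f : ℝ → ℝ}

lemma frameIntegrand_nonneg (hR : 0 ≤ R) (hf : ∀ s ∈ Icc 0 ((t - R) / 2), 0 ≤ f s) {ρ : ℝ}
    (hρ : ρ ∈ Icc 0 (t - R)) : 0 ≤ frameIntegrand m q p R t f ρ := by
  obtain ⟨hρ0, hρt⟩ := hρ
  have hI : 0 ≤ ∫ s in 0..(t - ρ - R) / 2, f s :=
    integral_nonneg (by linarith) fun s hs => hf s ⟨hs.1, by linarith [hs.2]⟩
  unfold frameIntegrand
  have := rpow_nonneg (by linarith : 0 ≤ t - ρ + R) (-q)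
  positivity

lemma continuousOn_frameIntegrand (hR : 0 < R) (hm : 0 ≤ m) (hp : 0 ≤ p) (ht : R ≤ t)
    (hf : ContinuousOn f (Icc 0 ((t - R) / 2))) :
    ContinuousOn (frameIntegrand m q p R t f) (Icc 0 (t - R)) := by
  have hσ : 0 ≤ (t - R) / 2 := by linarith
  have hprim : ContinuousOn (fun x => ∫ s in 0..x, f s) (Icc 0 ((t - R) / 2)) := by
    rw [← uIcc_of_le hσ] at hf ⊢
    exact continuousOn_primitive_interval hf.integrableOn_uIcc
  refine ((continuousOn_id.rpow_const fun _ _ => Or.inr hm).mul ?_).mul ?_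
  · exact ContinuousOn.rpow_const (by fun_prop) fun x hx => Or.inl (by linarith [hx.2])
  · refine (hprim.comp (by fun_prop) fun x hx => ?_).rpow_const fun _ _ => Or.inr hp
    constructor <;> linarith [hx.1, hx.2]

lemma mul_inv_le_frameIntegrand {A c ρ : ℝ} (hR : 0 < R) (hp : 0 < p) (hm : 0 ≤ m)
    (hpq : (m + 1) * p = q - 1) (hA : 0 ≤ A) (hc : 0 ≤ c) (hcρ : c ≤ ρ) (hρ : ρ ≤ t - 2 * R)
    (hI : A * ((t - ρ - R) / 2) ^ (m + 1) ≤ ∫ s in 0..(t - ρ - R) / 2, f s) :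
    A ^ p / (2 ^ (q - 1) * 3 ^ q) * c ^ m * (t - R - ρ)⁻¹ ≤ frameIntegrand m q p R t f ρ := by
  set u := t - ρ - R
  have hRu : R ≤ u := by linarith
  have hq : 0 < q := by nlinarith
  have hu0 : 0 < u := by linarith
  have hρm : 0 ≤ ρ ^ m := rpow_nonneg (hc.trans hcρ) m
  have hJ : 0 ≤ A * (u / 2) ^ (m + 1) := mul_nonneg hA (rpow_nonneg (by linarith) _)
  calc A ^ p / (2 ^ (q - 1) * 3 ^ q) * c ^ m * (t - R - ρ)⁻¹
      = c ^ m * (3 * u) ^ (-q) * (A * (u / 2) ^ (m + 1)) ^ p := by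
        rw [show t - R - ρ = u by ring, mul_rpow (by norm_num) (by linarith),
          mul_rpow hA (rpow_nonneg (by linarith) _), ← rpow_mul (by linarith), hpq,
          div_rpow (by linarith) (by norm_num), rpow_neg (by norm_num), rpow_neg (by linarith),
          rpow_sub_one hu0.ne', rpow_sub_one (by norm_num)]
        have : u ^ q ≠ 0 := (rpow_pos_of_pos hu0 q).ne'
        field_simp
    _ ≤ frameIntegrand m q p R t f ρ := by
        have hIp : (A * (u / 2) ^ (m + 1)) ^ p ≤ (∫ s in 0..u / 2, f s) ^ p :=
          rpow_le_rpow hJ hI hp.le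
        have h3u : (3 * u) ^ (-q) ≤ (t - ρ + R) ^ (-q) :=
          rpow_le_rpow_of_nonpos (by linarith) (by linarith) (by linarith)
        have h3u0 : 0 ≤ (3 * u) ^ (-q) := rpow_nonneg (by linarith) _
        unfold frameIntegrand
        gcongr
        exact mul_nonneg hρm (h3u0.trans h3u)

theorem rpow_mul_log_le_of_frame {C K T : ℝ} (hR : 0 < R) (hC : 0 ≤ C) (hK : 0 ≤ K)
    (hm : 0 ≤ m) (hp : 0 < p) (hpq : (m + 1) * p = q - 1)
    (hcont : ContinuousOn f (Ico 0 T)) (hpos : ∀ s ∈ Ico 0 T, 0 ≤ f s)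
    (hfirst : ∀ s, 0 ≤ s → s < T → K * (s + R) ^ m ≤ f s)
    (ht : 2 * R ≤ t) (hT : t < T)
    (hframe : C * ∫ ρ in 0..t - R, frameIntegrand m q p R t f ρ ≤ f t) :
    C * (K / (m + 1)) ^ p / (2 ^ (m + q - 1) * 3 ^ q) * (t - 2 * R) ^ m * log (t / (2 * R))
      ≤ f t := by
  have hsub : ∀ {σ}, σ ≤ (t - R) / 2 → Icc 0 σ ⊆ Ico 0 T := fun hσ _ hs =>
    ⟨hs.1, by linarith [hs.2]⟩
  have hint : IntervalIntegrable (frameIntegrand m q p R t f) MeasureTheory.volume 0 (t - R) :=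
    (continuousOn_frameIntegrand hR hm hp.le (by linarith)
      (hcont.mono (hsub le_rfl))).intervalIntegrable_of_Icc (by linarith)
  have hinner : ∀ ρ ∈ Icc ((t - 2 * R) / 2) (t - 2 * R),
      K / (m + 1) * ((t - ρ - R) / 2) ^ (m + 1) ≤ ∫ s in 0..(t - ρ - R) / 2, f s :=
    fun ρ hρ => div_mul_rpow_le_integral (by linarith) (by linarith [hρ.2])
      ((hcont.mono (hsub (by linarith [hρ.1]))).intervalIntegrable_of_Icc (by linarith [hρ.2]))
      fun s hs => (mul_le_mul_of_nonneg_left (rpow_le_rpow hs.1 (by linarith) hm) hK).trans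
        (hfirst s hs.1 (by linarith [hs.2, hρ.1]))
  set B := (K / (m + 1)) ^ p / (2 ^ (q - 1) * 3 ^ q) * ((t - 2 * R) / 2) ^ m with hBdef
  have hB : IntervalIntegrable (fun ρ => B * (t - R - ρ)⁻¹) MeasureTheory.volume
      ((t - 2 * R) / 2) (t - 2 * R) :=
    (continuousOn_const.mul (ContinuousOn.inv₀ (by fun_prop) fun x hx => by
      rw [uIcc_of_le (by linarith)] at hx; linarith [hx.2])).intervalIntegrable
  calc C * (K / (m + 1)) ^ p / (2 ^ (m + q - 1) * 3 ^ q) * (t - 2 * R) ^ m * log (t / (2 * R))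
      = C * ∫ ρ in (t - 2 * R) / 2..(t - 2 * R), B * (t - R - ρ)⁻¹ := by
        have hlog : (t - R - (t - 2 * R) / 2) / (t - R - (t - 2 * R)) = t / (2 * R) := by
          rw [show t - R - (t - 2 * R) = R by ring, show t - R - (t - 2 * R) / 2 = t / 2 by ring,
            div_div]
        rw [intervalIntegral.integral_const_mul,
          integral_inv_sub_left (by linarith) (by linarith), hlog, hBdef,
          div_rpow (by linarith : 0 ≤ t - 2 * R) zero_le_two m, add_sub_assoc, rpow_add two_pos]
        field_simp
    _ ≤ C * ∫ ρ in (t - 2 * R) / 2..(t - 2 * R), frameIntegrand m q p R t f ρ := by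
        gcongr
        refine integral_mono_on (by linarith) hB (hint.mono_set ?_) fun ρ hρ =>
          mul_inv_le_frameIntegrand hR hp hm hpq (by positivity) (by linarith) hρ.1 hρ.2
            (hinner ρ hρ)
        rw [uIcc_of_le (by linarith), uIcc_of_le (by linarith)]
        exact Icc_subset_Icc (by linarith) (by linarith)
    _ ≤ C * ∫ ρ in 0..t - R, frameIntegrand m q p R t f ρ := by
        gcongr
        refine integral_mono_interval (by linarith) (by linarith) (by linarith) ?_ hint
        filter_upwards [MeasureTheory.ae_restrict_mem measurableSet_Ioc] with ρ hρ
        exact frameIntegrand_nonneg hR.le (fun s hs => hpos s (hsub le_rfl hs)) ⟨hρ.1.le, hρ.2⟩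
    _ ≤ f t := hframe

end FrameIntegrand

lemma Cone_eq {n : ℕ} {p C ε : ℝ} (hC : 0 < C) (hε : 0 < ε)
    (hm : 0 ≤ ((n : ℝ) - 1) * (1 - p / 2)) :
    Cone n p C ε = C * (C * ε ^ p / (((n : ℝ) - 1) * (1 - p / 2) + 1)) ^ p /
      (2 ^ (((n : ℝ) - 1) * (1 - p / 2) + ((n : ℝ) - 1) * p / 2 - 1) *
        3 ^ (((n : ℝ) - 1) * p / 2)) := by
  have hm1 : ((n : ℝ) - 1) * (1 - p / 2) + 1 ≠ 0 := by positivity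
  rw [Cone, show (n : ℝ) - 2 = ((n : ℝ) - 1) * (1 - p / 2) + ((n : ℝ) - 1) * p / 2 - 1 by ring,
    show (n : ℝ) - ((n : ℝ) - 1) * p / 2 = ((n : ℝ) - 1) * (1 - p / 2) + 1 by ring,
    div_rpow (by positivity) (by positivity), mul_rpow hC.le (by positivity), sq,
    rpow_mul hε.le, rpow_add_one hC.ne']
  have : (((n : ℝ) - 1) * (1 - p / 2) + 1) ^ p ≠ 0 := (rpow_pos_of_pos (by positivity) p).ne'
  field_simp

theorem iteration_base_case_general
    (n : ℕ) (hn : 4 ≤ n) (p R C ε T : ℝ)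
    (hp : p = ((n : ℝ) + 1 + Real.sqrt ((n : ℝ) ^ 2 + 10 * (n : ℝ) - 7)) / (2 * ((n : ℝ) - 1)))
    (hR : 0 < R) (hC : 0 < C) (hε : 0 < ε)
    (F'' : ℝ → ℝ)
    (hcont : ContinuousOn F'' (Set.Ico 0 T))
    (hpos : ∀ t ∈ Set.Ico (0 : ℝ) T, 0 ≤ F'' t)
    (hframe : ∀ t, R ≤ t → t < T →
      C * ∫ ρ in (0 : ℝ)..(t - R),
          ρ ^ (((n : ℝ) - 1) * (1 - p / 2)) * (t - ρ + R) ^ (-(((n : ℝ) - 1) * p / 2)) *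
            (∫ s in (0 : ℝ)..((t - ρ - R) / 2), F'' s) ^ p
        ≤ F'' t)
    (hfirst : ∀ t, 0 ≤ t → t < T →
      C * ε ^ p * (t + R) ^ (((n : ℝ) - 1) * (1 - p / 2)) ≤ F'' t) :
    ∀ t, 2 * R ≤ t → t < T →
      Cone n p C ε * (t - 2 * R) ^ (((n : ℝ) - 1) * (1 - p / 2)) *
          Real.log (t / (2 * R)) ≤ F'' t := by
  intro t ht hT
  have hn' : (4 : ℝ) ≤ n := by exact_mod_cast hn
  have hquad := critical_exponent_quadratic (by linarith) hp
  have hp0 := critical_exponent_pos (by linarith) hp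
  have hm : 0 ≤ ((n : ℝ) - 1) * (1 - p / 2) := by
    nlinarith [critical_exponent_le_two hn' hp]
  rw [Cone_eq hC hε hm]
  exact rpow_mul_log_le_of_frame hR hC.le (by positivity) hm hp0
    (by linear_combination (-1 / 2 : ℝ) * hquad) hcont hpos hfirst ht hT
    (hframe t (by linarith) hT)

/-- **Base case `j = 1` of the iteration** (Proposition 3.3 for `j = 1`).
If `F ∈ C²([0,T))` with `F'' ≥ 0` satisfies the frame inequality and the
first-step bound `F''(t) ≥ C ε^p (t+R)^{(n-1)(1-p/2)}`, then for
`a₁R = 2R ≤ t < T` one has `F''(t) ≥ C₁ (t-2R)^{(n-1)(1-p/2)} log(t/(2R))`. -/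
theorem iteration_base_case
    (n : ℕ) (hn : 4 ≤ n) (p R C ε T : ℝ)
    (hp : p = ((n : ℝ) + 1 + Real.sqrt ((n : ℝ) ^ 2 + 10 * (n : ℝ) - 7)) / (2 * ((n : ℝ) - 1)))
    (hR : 0 < R) (hC : 0 < C) (hε : 0 < ε)
    (F F' F'' : ℝ → ℝ)
    (hF' : ∀ t ∈ Set.Ico (0 : ℝ) T, HasDerivWithinAt F (F' t) (Set.Ico 0 T) t)
    (hF'' : ∀ t ∈ Set.Ico (0 : ℝ) T, HasDerivWithinAt F' (F'' t) (Set.Ico 0 T) t)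
    (hcont : ContinuousOn F'' (Set.Ico 0 T))
    (hpos : ∀ t ∈ Set.Ico (0 : ℝ) T, 0 ≤ F'' t)
    (hframe : ∀ t, R ≤ t → t < T →
      C * ∫ ρ in (0 : ℝ)..(t - R),
          ρ ^ (((n : ℝ) - 1) * (1 - p / 2)) * (t - ρ + R) ^ (-(((n : ℝ) - 1) * p / 2)) *
            (∫ s in (0 : ℝ)..((t - ρ - R) / 2), F'' s) ^ p
        ≤ F'' t)
    (hfirst : ∀ t, 0 ≤ t → t < T →
      C * ε ^ p * (t + R) ^ (((n : ℝ) - 1) * (1 - p / 2)) ≤ F'' t) :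
    ∀ t, 2 * R ≤ t → t < T →
      Cone n p C ε * (t - 2 * R) ^ (((n : ℝ) - 1) * (1 - p / 2)) *
          Real.log (t / (2 * R)) ≤ F'' t :=
  iteration_base_case_general n hn p R C ε T hp hR hC hε F'' hcont hpos hframe hfirst
end
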